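/- Let θ₀ ∈ (0, π), β ∈ ℝ, k ∈ ℕ, μ := kπ/θ₀, and let φ : ℝ → ℝ be continuously differentiable. Define u : G → ℝ² by u(ψ(x, θ)) := e^{(β−2)x}·O(θ)·(φ(x)·cos(μθ), −φ(x)·sin(μθ)). Then for all (x, θ) ∈ ℝ×(0,θ₀): (div u)(ψ(x, θ)) = e^{(β−3)x}·((β − 1 − μ)·φ(x) + φ'(x))·cos(μθ). In particular, for k ∈ {0, 1, 2} this yields the coefficients (β−1+∂_x), (β−1−π/θ₀+∂_x), (β−1−2π/θ₀+∂_x) of the transformed divergence applied to the span of the first three eigenfunctions. -/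

import Mathlib

/-!
`ψ` has derivative `Dψ(x, θ) = eˣ O(θ)`, which is invertible with inverse `e⁻ˣ O(-θ)`, so by the
inverse function theorem `u = W ∘ ψ⁻¹` near `ψ(x, θ)` for `W := u ∘ ψ`, and
`Du(ψ(x, θ)) = DW(x, θ) e⁻ˣ O(-θ)`. Taking the trace expresses `div u ∘ ψ` through `∂ₓW` and
`∂_θW`. For `W = e^{(β-2)x} O(θ) v` the derivatives of the rotation cancel against each other up
to `cos² + sin² = 1`, leaving `div u ∘ ψ = e^{(β-3)x} ((β - 1) v₁ + ∂ₓv₁ + ∂_θv₂)`; for the mode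
`v = (φ cos μθ, -φ sin μθ)` this is `e^{(β-3)x} ((β - 1 - μ) φ + φ') cos μθ`.
-/

open Real Set

/-- The Euler/polar transform `ψ(x, θ) = (eˣ cos θ, eˣ sin θ)`. -/
noncomputable def psiW (q : ℝ × ℝ) : ℝ × ℝ :=
  (Real.exp q.1 * Real.cos q.2, Real.exp q.1 * Real.sin q.2)

/-- The layer `ℝ × (0, θ₀)`. -/
def layer (θ₀ : ℝ) : Set (ℝ × ℝ) := Set.univ ×ˢ Set.Ioo 0 θ₀

/-- The rotation matrix `O(θ)` with rows `(cos θ, −sin θ)` and `(sin θ, cos θ)`. -/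
noncomputable def Orot (θ : ℝ) (v : ℝ × ℝ) : ℝ × ℝ :=
  (Real.cos θ * v.1 - Real.sin θ * v.2, Real.sin θ * v.1 + Real.cos θ * v.2)

/-- Partial derivative in the first variable. -/
noncomputable def pd1 (f : ℝ × ℝ → ℝ) (q : ℝ × ℝ) : ℝ := fderiv ℝ f q (1, 0)

/-- Partial derivative in the second variable. -/
noncomputable def pd2 (f : ℝ × ℝ → ℝ) (q : ℝ × ℝ) : ℝ := fderiv ℝ f q (0, 1)

/-- The divergence `div u = ∂₁u₁ + ∂₂u₂` of a planar vector field. -/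
noncomputable def div2 (f : ℝ × ℝ → ℝ × ℝ) (y : ℝ × ℝ) : ℝ :=
  pd1 (fun z => (f z).1) y + pd2 (fun z => (f z).2) y

open Filter Topology ContinuousLinearMap

noncomputable def rotCLM (θ : ℝ) : ℝ × ℝ →L[ℝ] ℝ × ℝ :=
  (cos θ • fst ℝ ℝ ℝ - sin θ • snd ℝ ℝ ℝ).prod (sin θ • fst ℝ ℝ ℝ + cos θ • snd ℝ ℝ ℝ)

@[simp]
lemma rotCLM_apply (θ : ℝ) (v : ℝ × ℝ) : rotCLM θ v = Orot θ v := rfl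

lemma Orot_neg_Orot (θ : ℝ) (v : ℝ × ℝ) : Orot (-θ) (Orot θ v) = v := by
  ext <;> simp only [Orot, cos_neg, sin_neg]
  · linear_combination v.1 * sin_sq_add_cos_sq θ
  · linear_combination v.2 * sin_sq_add_cos_sq θ

lemma Orot_Orot_neg (θ : ℝ) (v : ℝ × ℝ) : Orot θ (Orot (-θ) v) = v := by
  simpa using Orot_neg_Orot (-θ) v

noncomputable def psiWDeriv (q : ℝ × ℝ) : (ℝ × ℝ) ≃L[ℝ] ℝ × ℝ :=
  ContinuousLinearEquiv.equivOfInverse (exp q.1 • rotCLM q.2) (exp (-q.1) • rotCLM (-q.2))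
    (fun v => by simp [Orot_neg_Orot, smul_smul, ← exp_add])
    (fun v => by simp [Orot_Orot_neg, smul_smul, ← exp_add])

lemma hasStrictFDerivAt_psiW (q : ℝ × ℝ) :
    HasStrictFDerivAt psiW (psiWDeriv q : ℝ × ℝ →L[ℝ] ℝ × ℝ) q := by
  have hE := (hasStrictFDerivAt_fst (p := q)).exp
  have hθ := hasStrictFDerivAt_snd (𝕜 := ℝ) (p := q)
  refine ((hE.mul hθ.cos).prodMk (hE.mul hθ.sin)).congr_fderiv ?_
  ext <;> simp [psiWDeriv, Orot] <;> ring

lemma div2_eq_of_comp_psiW {u W : ℝ × ℝ → ℝ × ℝ} {D : ℝ × ℝ →L[ℝ] ℝ × ℝ} {q : ℝ × ℝ}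
    (hW : HasFDerivAt W D q) (hu : ∀ᶠ p in 𝓝 q, u (psiW p) = W p) :
    div2 u (psiW q) =
      exp (-q.1) * ((D (cos q.2, -sin q.2)).1 + (D (sin q.2, cos q.2)).2) := by
  have hψ := hasStrictFDerivAt_psiW q
  have hug : u =ᶠ[𝓝 (psiW q)] W ∘ hψ.localInverse psiW _ q := by
    filter_upwards [hψ.eventually_right_inverse, hψ.localInverse_tendsto.eventually hu]
      with y hy hWy
    rw [Function.comp_apply, ← hWy, hy]
  have hu' : HasFDerivAt u (D ∘L ((psiWDeriv q).symm : ℝ × ℝ →L[ℝ] ℝ × ℝ)) (psiW q) :=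
    ((hψ.localInverse_apply_image ▸ hW).comp (psiW q) hψ.to_localInverse.hasFDerivAt
      ).congr_of_eventuallyEq hug
  unfold div2 pd1 pd2
  rw [hu'.fst.fderiv, hu'.snd.fderiv]
  have hsymm : ∀ v, (psiWDeriv q).symm v = exp (-q.1) • Orot (-q.2) v := fun _ => rfl
  have h₁ : (psiWDeriv q).symm (1, 0) = exp (-q.1) • (cos q.2, -sin q.2) := by
    ext <;> simp [hsymm, Orot]
  have h₂ : (psiWDeriv q).symm (0, 1) = exp (-q.1) • (sin q.2, cos q.2) := by
    ext <;> simp [hsymm, Orot]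
  simp only [comp_apply, coe_fst', coe_snd', ContinuousLinearEquiv.coe_coe, h₁, h₂, map_smul,
    smul_eq_mul, mul_add]

lemma map_pair_eq_smul_add_smul {M : Type*} [TopologicalSpace M] [AddCommMonoid M] [Module ℝ M]
    (L : ℝ × ℝ →L[ℝ] M) (a b : ℝ) : L (a, b) = a • L (1, 0) + b • L (0, 1) := by
  rw [← map_smul, ← map_smul, ← map_add]
  simp

lemma div2_eq_of_comp_psiW_eq_smul_Orot {u v : ℝ × ℝ → ℝ × ℝ} {Dv : ℝ × ℝ →L[ℝ] ℝ × ℝ}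
    {q : ℝ × ℝ} (β : ℝ) (hv : HasFDerivAt v Dv q)
    (hu : ∀ᶠ p in 𝓝 q, u (psiW p) = exp ((β - 2) * p.1) • Orot p.2 (v p)) :
    div2 u (psiW q) =
      exp ((β - 3) * q.1) * ((β - 1) * (v q).1 + (Dv (1, 0)).1 + (Dv (0, 1)).2) := by
  have hE := ((hasFDerivAt_fst (p := q)).const_mul (β - 2)).exp
  have hC := (hasFDerivAt_snd (p := q)).cos
  have hS := (hasFDerivAt_snd (p := q)).sin
  have hW := (hE.mul ((hC.mul hv.fst).sub (hS.mul hv.snd))).prodMk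
    (hE.mul ((hS.mul hv.fst).add (hC.mul hv.snd)))
  rw [div2_eq_of_comp_psiW hW hu]
  simp only [Pi.sub_apply, Pi.mul_apply, smul_add, Pi.add_apply, prod_apply, add_apply,
    smul_apply, sub_apply, comp_apply, coe_fst', smul_eq_mul, coe_snd', mul_neg, neg_mul, neg_neg]
  rw [map_pair_eq_smul_add_smul Dv (cos q.2), map_pair_eq_smul_add_smul Dv (sin q.2)]
  simp only [neg_smul, Prod.fst_add, Prod.smul_fst, smul_eq_mul, Prod.fst_neg, Prod.snd_add,
    Prod.smul_snd, Prod.snd_neg]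
  rw [show (β - 3) * q.1 = -q.1 + (β - 2) * q.1 by ring, exp_add]
  linear_combination exp (-q.1) * exp ((β - 2) * q.1) *
    ((β - 1) * (v q).1 + (Dv (1, 0)).1 + (Dv (0, 1)).2) * sin_sq_add_cos_sq q.2

lemma isOpen_layer (θ₀ : ℝ) : IsOpen (layer θ₀) := isOpen_univ.prod isOpen_Ioo

theorem stmt12_general (θ₀ β : ℝ) (k : ℕ)
    (φ : ℝ → ℝ) (hφ : ContDiff ℝ 1 φ)
    (u : ℝ × ℝ → ℝ × ℝ)
    (hu : ∀ q ∈ layer θ₀,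
      u (psiW q) = Real.exp ((β - 2) * q.1) • Orot q.2
        (φ q.1 * Real.cos (k * π / θ₀ * q.2), -φ q.1 * Real.sin (k * π / θ₀ * q.2))) :
    ∀ q ∈ layer θ₀,
      div2 u (psiW q) =
        Real.exp ((β - 3) * q.1) * ((β - 1 - k * π / θ₀) * φ q.1 + deriv φ q.1) *
          Real.cos (k * π / θ₀ * q.2) := by
  intro q hq
  set μ : ℝ := k * π / θ₀
  have hφx : HasFDerivAt (fun p : ℝ × ℝ => φ p.1) (deriv φ q.1 • fst ℝ ℝ ℝ) q :=
    ((hφ.differentiable one_ne_zero q.1).hasDerivAt).comp_hasFDerivAt q hasFDerivAt_fst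
  have hμθ := (hasFDerivAt_snd (𝕜 := ℝ) (p := q)).const_mul μ
  have hv := (hφx.mul hμθ.cos).prodMk (hφx.neg.mul hμθ.sin)
  rw [div2_eq_of_comp_psiW_eq_smul_Orot β hv
    (eventually_of_mem ((isOpen_layer θ₀).mem_nhds hq) hu)]
  simp only [Pi.mul_apply, Pi.neg_apply, neg_smul, smul_neg, prod_apply, add_apply, smul_apply,
    coe_snd', smul_eq_mul, mul_zero, coe_fst', mul_one, zero_add, neg_apply, neg_zero, neg_mul,
    mul_neg, add_zero]
  ring

/-- The transformed divergence on the non-solenoidal eigenmodes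
`(φ(x) cos(μθ), −φ(x) sin(μθ))`, `μ = kπ/θ₀`:
`div u ∘ ψ = e^{(β−3)x} ((β−1−μ)φ + φ') cos(μθ)`. -/
theorem stmt12 (θ₀ β : ℝ) (hθ₀ : θ₀ ∈ Set.Ioo 0 π) (k : ℕ)
    (φ : ℝ → ℝ) (hφ : ContDiff ℝ 1 φ)
    (u : ℝ × ℝ → ℝ × ℝ)
    (hu : ∀ q ∈ layer θ₀,
      u (psiW q) = Real.exp ((β - 2) * q.1) • Orot q.2
        (φ q.1 * Real.cos (k * π / θ₀ * q.2), -φ q.1 * Real.sin (k * π / θ₀ * q.2))) :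
    ∀ q ∈ layer θ₀,
      div2 u (psiW q) =
        Real.exp ((β - 3) * q.1) * ((β - 1 - k * π / θ₀) * φ q.1 + deriv φ q.1) *
          Real.cos (k * π / θ₀ * q.2) :=
  stmt12_general θ₀ β k φ hφ u hu
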